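/- If J is a maximum critical independent set of a graph G and X = J ∪ N(J), then α(G) = α(G[X]) + α(G[V - X]). -/
import Mathlib


open Finset

open scoped Classical

variable {V : Type*}

/-- The neighborhood `N(X)` of a set of vertices `X`. -/
noncomputable def nbhd [Fintype V] (G : SimpleGraph V) (X : Finset V) : Finset V :=
  Finset.univ.filter (fun v => ∃ x ∈ X, G.Adj v x)

/-- The difference `d(X) = |X| - |N(X)|`. -/
noncomputable def diffd [Fintype V] (G : SimpleGraph V) (X : Finset V) : ℤ :=
  (X.card : ℤ) - ((nbhd G X).card : ℤ)

/-- The critical difference `d_c(G) = max{d(X) : X ⊆ V}`. -/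
noncomputable def critDiff [Fintype V] (G : SimpleGraph V) : ℤ :=
  Finset.univ.powerset.sup' ⟨∅, Finset.empty_mem_powerset _⟩ (diffd G)

/-- A set of vertices is independent if no two of its vertices are adjacent. -/
def IsIndep [Fintype V] (G : SimpleGraph V) (A : Finset V) : Prop :=
  ∀ a ∈ A, ∀ b ∈ A, ¬ G.Adj a b

/-- A critical independent set: independent with `d(A) = d_c(G)`. -/
def IsCritIndep [Fintype V] (G : SimpleGraph V) (A : Finset V) : Prop :=
  IsIndep G A ∧ diffd G A = critDiff G

/-- The independence number `α(G)`. -/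
noncomputable def indepNum [Fintype V] (G : SimpleGraph V) : ℕ :=
  (Finset.univ.powerset.filter (fun A => IsIndep G A)).sup Finset.card

/-- The independence number of the induced subgraph `G[X]`,
realized as the largest independent set contained in `X`. -/
noncomputable def indepNumOn [Fintype V] (G : SimpleGraph V) (X : Finset V) : ℕ :=
  (X.powerset.filter (fun A => IsIndep G A)).sup Finset.card

/-- A matching: a set of edges of `G`, pairwise vertex-disjoint. -/
def IsMatchingSet [Fintype V] (G : SimpleGraph V) (M : Finset (Sym2 V)) : Prop :=
  (∀ e ∈ M, e ∈ G.edgeSet) ∧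
  (∀ e ∈ M, ∀ f ∈ M, e ≠ f → ∀ v : V, v ∈ e → v ∉ f)

/-- The matching number `μ(G)`. -/
noncomputable def matchNum [Fintype V] (G : SimpleGraph V) : ℕ :=
  ((Finset.univ : Finset (Sym2 V)).powerset.filter (fun M => IsMatchingSet G M)).sup Finset.card

/-- The matching number of the induced subgraph `G[X]`, realized as the
largest matching of `G` all of whose edges have both endpoints in `X`. -/
noncomputable def matchNumOn [Fintype V] (G : SimpleGraph V) (X : Finset V) : ℕ :=
  ((Finset.univ : Finset (Sym2 V)).powerset.filter
    (fun M => IsMatchingSet G M ∧ ∀ e ∈ M, ∀ v ∈ e, v ∈ X)).sup Finset.card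

/-- `ker(G)`: the intersection of all critical independent sets. -/
noncomputable def kerG [Fintype V] (G : SimpleGraph V) : Finset V :=
  Finset.univ.filter (fun v => ∀ A : Finset V, IsCritIndep G A → v ∈ A)

/-- A maximum independent set, i.e. a member of `Ω(G)`. -/
def IsMaxIndep [Fintype V] (G : SimpleGraph V) (S : Finset V) : Prop :=
  IsIndep G S ∧ S.card = indepNum G

/-- `core(G)`: the intersection of all maximum independent sets. -/
noncomputable def coreG [Fintype V] (G : SimpleGraph V) : Finset V :=
  Finset.univ.filter (fun v => ∀ S : Finset V, IsMaxIndep G S → v ∈ S)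

/-- `corona(G)`: the union of all maximum independent sets. -/
noncomputable def coronaG [Fintype V] (G : SimpleGraph V) : Finset V :=
  Finset.univ.filter (fun v => ∃ S : Finset V, IsMaxIndep G S ∧ v ∈ S)

/-- `G` has no isolated vertices. -/
def NoIsolated (G : SimpleGraph V) : Prop := ∀ v : V, ∃ w, G.Adj v w


section Aux
variable [Fintype V]

lemma mem_nbhd' (G : SimpleGraph V) (X : Finset V) (v : V) :
    v ∈ nbhd G X ↔ ∃ x ∈ X, G.Adj v x := by
  simp [nbhd]

lemma nbhd_mono (G : SimpleGraph V) {A B : Finset V} (h : A ⊆ B) :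
    nbhd G A ⊆ nbhd G B := by
  intro v hv
  rw [mem_nbhd'] at hv ⊢
  obtain ⟨x, hx, hadj⟩ := hv
  exact ⟨x, h hx, hadj⟩

lemma diffd_le_critDiff (G : SimpleGraph V) (A : Finset V) :
    diffd G A ≤ critDiff G :=
  Finset.le_sup' (diffd G) (Finset.mem_powerset.2 (Finset.subset_univ A))

/-- Hall-type matching: if `J` is critical, there is an injection from `N(J)` into `J`
mapping each vertex to a neighbor in `J`. -/
lemma exists_matching_into (G : SimpleGraph V) (J : Finset V)
    (hJ : diffd G J = critDiff G) :
    ∃ f : {x // x ∈ nbhd G J} → V, Function.Injective f ∧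
      ∀ x : {x // x ∈ nbhd G J}, f x ∈ J ∧ G.Adj (x : V) (f x) := by
  set r : {x // x ∈ nbhd G J} → Finset V := fun v => J.filter (fun y => G.Adj (v : V) y)
  have hall : ∀ s : Finset {x // x ∈ nbhd G J}, s.card ≤ (s.biUnion r).card := by
    intro s
    by_contra hlt
    push_neg at hlt
    set T : Finset V := s.image Subtype.val with hT
    have hTcard : T.card = s.card := Finset.card_image_of_injective _ Subtype.val_injective
    have hTsub : T ⊆ nbhd G J := by
      intro v hv
      simp only [hT, Finset.mem_image] at hv
      obtain ⟨w, _, rfl⟩ := hv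
      exact w.2
    set B : Finset V := s.biUnion r with hB
    have hBsub : B ⊆ J := by
      intro v hv
      simp only [hB, Finset.mem_biUnion] at hv
      obtain ⟨w, _, hw⟩ := hv
      exact (Finset.mem_filter.1 hw).1
    -- consider J' = J \ B
    set J' : Finset V := J \ B with hJ'
    have hJ'card : (J'.card : ℤ) = J.card - B.card := by
      rw [Finset.card_sdiff_of_subset hBsub]
      have := Finset.card_le_card hBsub
      omega
    have hNsub : nbhd G J' ⊆ (nbhd G J) \ T := by
      intro v hv
      rw [mem_nbhd'] at hv
      obtain ⟨x, hx, hadj⟩ := hv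
      have hxJ : x ∈ J := (Finset.mem_sdiff.1 hx).1
      have hxB : x ∉ B := (Finset.mem_sdiff.1 hx).2
      refine Finset.mem_sdiff.2 ⟨(mem_nbhd' G J v).2 ⟨x, hxJ, hadj⟩, ?_⟩
      intro hvT
      apply hxB
      simp only [hT, Finset.mem_image] at hvT
      obtain ⟨w, hws, hwv⟩ := hvT
      simp only [hB, Finset.mem_biUnion]
      exact ⟨w, hws, Finset.mem_filter.2 ⟨hxJ, by rw [hwv]; exact hadj⟩⟩
    have hNcard : ((nbhd G J').card : ℤ) ≤ (nbhd G J).card - T.card := by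
      have h1 := Finset.card_le_card hNsub
      rw [Finset.card_sdiff_of_subset hTsub] at h1
      have := Finset.card_le_card hTsub
      omega
    have hgt : diffd G J' > diffd G J := by
      unfold diffd
      rw [hJ'card]
      have : (B.card : ℤ) < T.card := by rw [hTcard]; exact_mod_cast hlt
      omega
    exact absurd (diffd_le_critDiff G J') (by rw [← hJ]; omega)
  obtain ⟨f, hinj, hf⟩ := (Finset.all_card_le_biUnion_card_iff_exists_injective r).1 hall
  exact ⟨f, hinj, fun x => ⟨(Finset.mem_filter.1 (hf x)).1, (Finset.mem_filter.1 (hf x)).2⟩⟩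

end Aux

/-- if `J` is a maximum critical independent set and `X = J ∪ N(J)`,
then `α(G) = α(G[X]) + α(G[V - X])`. -/
theorem stmt_14 {V : Type*} [Fintype V] (G : SimpleGraph V) (J X : Finset V)
    (hJ : IsCritIndep G J) (hmax : ∀ A : Finset V, IsCritIndep G A → A.card ≤ J.card)
    (hX : X = J ∪ nbhd G J) :
    indepNum G = indepNumOn G X + indepNumOn G (Finset.univ \ X) := by
  obtain ⟨hJindep, hJcrit⟩ := hJ
  obtain ⟨f, hfinj, hf⟩ := exists_matching_into G J hJcrit
  classical
  have hJX : J ⊆ X := by rw [hX]; exact Finset.subset_union_left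
  -- α(G[X]) ≤ |J|
  have hXle : indepNumOn G X ≤ J.card := by
    apply Finset.sup_le
    intro A hA
    rw [Finset.mem_filter, Finset.mem_powerset] at hA
    obtain ⟨hAX, hAind⟩ := hA
    -- injection g : A → J
    set g : V → V := fun a => if h : a ∈ nbhd G J then f ⟨a, h⟩ else a with hg
    have hgmaps : ∀ a ∈ A, g a ∈ J := by
      intro a ha
      by_cases h : a ∈ nbhd G J
      · simp only [hg, dif_pos h]; exact (hf ⟨a, h⟩).1
      · simp only [hg, dif_neg h]
        have := hAX ha
        rw [hX, Finset.mem_union] at this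
        tauto
    have hginj : Set.InjOn g A := by
      intro a ha b hb hab
      by_cases h1 : a ∈ nbhd G J <;> by_cases h2 : b ∈ nbhd G J
      · simp only [hg, dif_pos h1, dif_pos h2] at hab
        exact congrArg Subtype.val (hfinj hab)
      · exfalso
        simp only [hg, dif_pos h1, dif_neg h2] at hab
        have hadj : G.Adj a b := hab ▸ (hf ⟨a, h1⟩).2
        exact hAind a ha b hb hadj
      · exfalso
        simp only [hg, dif_neg h1, dif_pos h2] at hab
        have hadj : G.Adj b a := hab ▸ (hf ⟨b, h2⟩).2
        exact hAind b hb a ha hadj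
      · simpa [hg, dif_neg h1, dif_neg h2] using hab
    exact Finset.card_le_card_of_injOn g hgmaps hginj
  -- pick a maximum independent set I' in V \ X
  have hne : (((Finset.univ \ X).powerset.filter (fun A => IsIndep G A))).Nonempty :=
    ⟨∅, Finset.mem_filter.2 ⟨Finset.empty_mem_powerset _, fun a ha => absurd ha (by simp)⟩⟩
  obtain ⟨I', hI'mem, hI'card⟩ := Finset.exists_mem_eq_sup _ hne Finset.card
  rw [Finset.mem_filter, Finset.mem_powerset] at hI'mem
  obtain ⟨hI'sub, hI'ind⟩ := hI'mem
  have hdisjX : ∀ a ∈ I', a ∉ X := fun a ha => (Finset.mem_sdiff.1 (hI'sub ha)).2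
  -- J ∪ I' is independent
  have hJI : IsIndep G (J ∪ I') := by
    intro a ha b hb hadj
    rw [Finset.mem_union] at ha hb
    rcases ha with ha | ha <;> rcases hb with hb | hb
    · exact hJindep a ha b hb hadj
    · refine hdisjX b hb ?_
      rw [hX, Finset.mem_union]
      exact Or.inr ((mem_nbhd' G J b).2 ⟨a, ha, hadj.symm⟩)
    · refine hdisjX a ha ?_
      rw [hX, Finset.mem_union]
      exact Or.inr ((mem_nbhd' G J a).2 ⟨b, hb, hadj⟩)
    · exact hI'ind a ha b hb hadj
  have hdisj : Disjoint J I' := Finset.disjoint_left.2 (fun a ha hb => hdisjX a hb (hJX ha))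
  -- lower bound on indepNum
  have hge : J.card + I'.card ≤ indepNum G := by
    have := Finset.le_sup (f := Finset.card)
      (Finset.mem_filter.2 ⟨Finset.mem_powerset.2 (Finset.subset_univ (J ∪ I')), hJI⟩)
    rwa [Finset.card_union_of_disjoint hdisj] at this
  -- upper bound: indepNum ≤ indepNumOn X + indepNumOn (univ \ X)
  have hub : indepNum G ≤ indepNumOn G X + indepNumOn G (Finset.univ \ X) := by
    apply Finset.sup_le
    intro A hA
    rw [Finset.mem_filter] at hA
    obtain ⟨_, hAind⟩ := hA
    have h1 : (A ∩ X).card ≤ indepNumOn G X := by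
      apply Finset.le_sup (f := Finset.card)
      refine Finset.mem_filter.2 ⟨Finset.mem_powerset.2 Finset.inter_subset_right, ?_⟩
      intro a ha b hb
      exact hAind a (Finset.mem_inter.1 ha).1 b (Finset.mem_inter.1 hb).1
    have h2 : (A \ X).card ≤ indepNumOn G (Finset.univ \ X) := by
      apply Finset.le_sup (f := Finset.card)
      refine Finset.mem_filter.2 ⟨Finset.mem_powerset.2 ?_, ?_⟩
      · intro a ha
        exact Finset.mem_sdiff.2 ⟨Finset.mem_univ a, (Finset.mem_sdiff.1 ha).2⟩
      · intro a ha b hb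
        exact hAind a (Finset.mem_sdiff.1 ha).1 b (Finset.mem_sdiff.1 hb).1
    calc A.card = (A ∩ X).card + (A \ X).card := (Finset.card_inter_add_card_sdiff A X).symm
      _ ≤ _ := Nat.add_le_add h1 h2
  -- conclude
  have hlb : indepNumOn G X + indepNumOn G (Finset.univ \ X) ≤ indepNum G := by
    have h2 : indepNumOn G (Finset.univ \ X) = I'.card := hI'card
    omega
  omega
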